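/- Let B⟨X⟩ be as above and define the B-symmetrization operator C : B⟨X⟩ → B⟨X⟩ by C[p] = (1⊗X) # δ_{X:B}[p], so that on monomials C[b₀Xb₁⋯Xb_n] = Σ_{i=0}^{n-1} b_{i+1}X⋯Xb_n b₀X⋯Xb_i X. Then ker(C) = B + [B⟨X⟩, B⟨X⟩]. -/

import Mathlib

open scoped TensorProduct

noncomputable section

/-- `(A, ι, X)` is the free product `B *_ℂ ℂ⟨X⟩`, characterized by its universal
property: every algebra map `φ : B → C` together with a choice of element `x ∈ C`
extends uniquely to an algebra map `A → C` sending `X` to `x`. -/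
def IsFreeProduct {B A : Type} [Ring B] [Algebra ℂ B] [Ring A] [Algebra ℂ A]
    (ι : B →ₐ[ℂ] A) (X : A) : Prop :=
  ∀ (C : Type) [Ring C] [Algebra ℂ C], ∀ (φ : B →ₐ[ℂ] C) (x : C),
    ∃! ψ : A →ₐ[ℂ] C, ψ.comp ι = φ ∧ ψ X = x

/-- the monomial `b₀ X b₁ ⋯ X bₙ`, where `bs = [b₁, …, bₙ]`. -/
def mono {B A : Type} [Ring B] [Algebra ℂ B] [Ring A] [Algebra ℂ A]
    (ι : B →ₐ[ℂ] A) (X : A) (b0 : B) (bs : List B) : A :=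
  ι b0 * (bs.map (fun b => X * ι b)).prod

/-- the cyclic derivative `δ = μ ∘ σ ∘ ∂` associated with a difference quotient `D`. -/
def cyclicDer {A : Type} [Ring A] [Algebra ℂ A] (D : A →ₗ[ℂ] A ⊗[ℂ] A) : A →ₗ[ℂ] A :=
  (LinearMap.mul' ℂ A) ∘ₗ (TensorProduct.comm ℂ A A).toLinearMap ∘ₗ D

/-- the operation `u # b`, determined by `(a ⊗ c) # b = a b c`. -/
def sharp {A : Type} [Ring A] [Algebra ℂ A] (u : A ⊗[ℂ] A) (b : A) : A :=
  LinearMap.mul' ℂ A (u * (b ⊗ₜ[ℂ] (1 : A)))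

/-- the divergence operator `∂* : u ↦ u # X`, i.e. `(a ⊗ c) ↦ a X c`. -/
def divg {A : Type} [Ring A] [Algebra ℂ A] (X : A) : A ⊗[ℂ] A →ₗ[ℂ] A :=
  (LinearMap.mul' ℂ A) ∘ₗ (LinearMap.mulRight ℂ (X ⊗ₜ[ℂ] (1 : A)))

/-- the number operator `N = ∂* ∘ ∂`. -/
def numOp {A : Type} [Ring A] [Algebra ℂ A] (X : A) (D : A →ₗ[ℂ] A ⊗[ℂ] A) :
    A →ₗ[ℂ] A :=
  divg X ∘ₗ D

/-!
The number operator `N = ∂* ∘ ∂` is a derivation with `N X = X` and `N = 0` on `B`, so it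
multiplies a monomial `b₀ X b₁ ⋯ X bₙ` by `n`. If `∂ p = a ⊗ c`, then `C p = c a X` and
`N p = a X c` differ by the commutator `[c, a X]`, so `C ≡ N` modulo commutators. As
`δ(pq) = δ(qp)`, `C` kills `M = B + [B⟨X⟩, B⟨X⟩]`. Conversely, if `C p = 0` then `N p ∈ M`;
but `N` preserves `M`, and since the monomials of degree `0` lie in `B`, the quotient
`B⟨X⟩ / M` is spanned by eigenvectors of `N` with nonzero eigenvalues, so `p ∈ M`.
-/

section TensorIdentities

variable {R A : Type*} [CommSemiring R] [Semiring A] [Algebra R A]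

lemma LinearMap.mul'_tmul_one_mul (p : A) (u : A ⊗[R] A) :
    mul' R A ((p ⊗ₜ[R] (1 : A)) * u) = p * mul' R A u := by
  induction u using TensorProduct.induction_on with
  | zero => simp
  | tmul a c => simp [mul_assoc]
  | add x y hx hy => simp only [mul_add, map_add, hx, hy]

lemma LinearMap.mul'_mul_one_tmul (u : A ⊗[R] A) (q : A) :
    mul' R A (u * ((1 : A) ⊗ₜ[R] q)) = mul' R A u * q := by
  induction u using TensorProduct.induction_on with
  | zero => simp
  | tmul a c => simp [mul_assoc]
  | add x y hx hy => simp only [add_mul, map_add, hx, hy]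

lemma LinearMap.mul'_comm_mul_one_tmul (u : A ⊗[R] A) (q : A) :
    mul' R A (TensorProduct.comm R A A (u * ((1 : A) ⊗ₜ[R] q))) =
      mul' R A (TensorProduct.comm R A A ((q ⊗ₜ[R] (1 : A)) * u)) := by
  induction u using TensorProduct.induction_on with
  | zero => simp
  | tmul a c => simp [mul_assoc]
  | add x y hx hy => simp only [add_mul, mul_add, map_add, hx, hy]

end TensorIdentities

def commutatorSpan (R A : Type*) [CommRing R] [Ring A] [Algebra R A] : Submodule R A :=
  Submodule.span R {x : A | ∃ p q : A, x = p * q - q * p}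

lemma commutatorSpan_le_comap {R A : Type*} [CommRing R] [Ring A] [Algebra R A]
    (f : A →ₗ[R] A) (hf : ∀ p q : A, f (p * q) = p * f q + f p * q) :
    commutatorSpan R A ≤ (commutatorSpan R A).comap f := by
  refine Submodule.span_le.mpr ?_
  rintro _ ⟨p, q, rfl⟩
  have h : f (p * q - q * p) = (p * f q - f q * p) + (f p * q - q * f p) := by
    rw [map_sub, hf, hf]; abel
  rw [SetLike.mem_coe, Submodule.mem_comap, h]
  exact add_mem (Submodule.subset_span ⟨p, f q, rfl⟩) (Submodule.subset_span ⟨f p, q, rfl⟩)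

lemma Module.End.mem_of_apply_mem {K V : Type*} [Field K] [AddCommGroup V] [Module K V]
    (f : Module.End K V) {W : Submodule K V} (hW : W ≤ W.comap f)
    (htop : ⊤ ≤ W ⊔ ⨆ (μ : K) (_ : μ ≠ 0), f.eigenspace μ) {v : V} (hv : f v ∈ W) :
    v ∈ W := by
  set g : Module.End K (V ⧸ W) := W.mapQ W f hW
  have hmap : ∀ μ, (f.eigenspace μ).map W.mkQ ≤ g.eigenspace μ := by
    rintro μ _ ⟨x, hx, rfl⟩
    rw [SetLike.mem_coe, Module.End.mem_eigenspace_iff] at hx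
    simp [g, hx]
  have hzero : W.mkQ v ∈ g.eigenspace 0 := by
    simpa [Module.End.mem_eigenspace_iff, g, Submodule.Quotient.mk_eq_zero] using hv
  have hnonzero : W.mkQ v ∈ ⨆ (μ : K) (_ : μ ≠ 0), g.eigenspace μ := by
    have hv' : W.mkQ v ∈ (W ⊔ ⨆ (μ : K) (_ : μ ≠ 0), f.eigenspace μ).map W.mkQ :=
      Submodule.mem_map_of_mem (htop trivial)
    simp only [Submodule.map_sup, Submodule.mkQ_map_self, bot_sup_eq, Submodule.map_iSup] at hv'
    exact (iSup₂_mono fun μ _ => hmap μ) hv'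
  have hdisj := iSupIndep_def.mp g.eigenspaces_iSupIndep 0
  simpa [Submodule.Quotient.mk_eq_zero] using Submodule.disjoint_def.mp hdisj _ hzero hnonzero

section FreeProduct

variable {B A : Type} [Ring B] [Algebra ℂ B] [Ring A] [Algebra ℂ A]
  {ι : B →ₐ[ℂ] A} {X : A}

lemma IsFreeProduct.eq_top_of_mem (hfree : IsFreeProduct ι X) {S : Subalgebra ℂ A}
    (hι : ∀ b, ι b ∈ S) (hX : X ∈ S) : S = ⊤ := by
  obtain ⟨ψ, ⟨hψι, hψX⟩, -⟩ := hfree S (ι.codRestrict S hι) ⟨X, hX⟩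
  have hψ : S.val.comp ψ = AlgHom.id ℂ A := by
    refine (hfree A ι X).unique ⟨?_, by simp [hψX]⟩ ⟨rfl, rfl⟩
    ext b
    simpa using congrArg (fun φ : B →ₐ[ℂ] S => (φ b : A)) hψι
  refine eq_top_iff.mpr fun a _ => ?_
  have ha : (ψ a : A) = a := AlgHom.congr_fun hψ a
  exact ha ▸ (ψ a).2

variable (ι X)

lemma mono_nil (b₀ : B) : mono ι X b₀ [] = ι b₀ := by simp [mono]

lemma mono_cons (b₀ b : B) (bs : List B) :
    mono ι X b₀ (b :: bs) = ι b₀ * (X * mono ι X b bs) := by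
  simp [mono, mul_assoc]

lemma exists_mono_mul_mono (b₀ c₀ : B) (bs cs : List B) :
    ∃ d₀ ds, mono ι X b₀ bs * mono ι X c₀ cs = mono ι X d₀ ds := by
  induction bs generalizing b₀ with
  | nil => exact ⟨b₀ * c₀, cs, by simp [mono, mul_assoc]⟩
  | cons b bs ih =>
    obtain ⟨d₀, ds, h⟩ := ih b
    exact ⟨b₀, d₀ :: ds, by rw [mono_cons, mono_cons, mul_assoc, mul_assoc, h]⟩

lemma span_range_mono_eq_top (hfree : IsFreeProduct ι X) :
    Submodule.span ℂ (Set.range fun m : B × List B => mono ι X m.1 m.2) = ⊤ := by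
  set P := Submodule.span ℂ (Set.range fun m : B × List B => mono ι X m.1 m.2)
  have hmono : ∀ b₀ bs, mono ι X b₀ bs ∈ P := fun b₀ bs =>
    Submodule.subset_span ⟨(b₀, bs), rfl⟩
  have hmul : P * P ≤ P := by
    rw [Submodule.span_mul_span, Submodule.span_le]
    rintro _ ⟨_, ⟨⟨b₀, bs⟩, rfl⟩, _, ⟨⟨c₀, cs⟩, rfl⟩, rfl⟩
    obtain ⟨d₀, ds, h⟩ := exists_mono_mul_mono ι X b₀ c₀ bs cs
    simpa only [SetLike.mem_coe, h] using hmono d₀ ds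
  have hone : (1 : A) ∈ P := by simpa [mono_nil] using hmono 1 []
  have htop := hfree.eq_top_of_mem
    (S := P.toSubalgebra hone fun _ _ hx hy => hmul (Submodule.mul_mem_mul hx hy))
    (fun b => by simpa [mono_nil] using hmono b []) (by simpa [mono] using hmono 1 [1])
  simpa using congrArg Subalgebra.toSubmodule htop

end FreeProduct

section Symmetrization

variable {A : Type} [Ring A] [Algebra ℂ A] (X : A)

lemma divg_tmul_one_mul (p : A) (u : A ⊗[ℂ] A) :
    divg X ((p ⊗ₜ[ℂ] (1 : A)) * u) = p * divg X u := by
  simp only [divg, LinearMap.comp_apply, LinearMap.mulRight_apply, mul_assoc,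
    LinearMap.mul'_tmul_one_mul]

lemma divg_mul_one_tmul (u : A ⊗[ℂ] A) (q : A) :
    divg X (u * ((1 : A) ⊗ₜ[ℂ] q)) = divg X u * q := by
  have hcomm : ((1 : A) ⊗ₜ[ℂ] q) * (X ⊗ₜ[ℂ] (1 : A)) =
      (X ⊗ₜ[ℂ] (1 : A)) * ((1 : A) ⊗ₜ[ℂ] q) := by
    simp
  simp only [divg, LinearMap.comp_apply, LinearMap.mulRight_apply, mul_assoc, hcomm,
    ← LinearMap.mul'_mul_one_tmul]

lemma mul'_comm_mul_sub_divg_mem_commutatorSpan (u : A ⊗[ℂ] A) :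
    LinearMap.mul' ℂ A (TensorProduct.comm ℂ A A u) * X - divg X u ∈
      commutatorSpan ℂ A := by
  induction u using TensorProduct.induction_on with
  | zero => simp
  | tmul a c =>
    refine Submodule.subset_span ⟨c, a * X, ?_⟩
    simp [divg, mul_assoc]
  | add x y hx hy => simpa only [map_add, add_mul, add_sub_add_comm] using add_mem hx hy

def IsTensorDerivation (D : A →ₗ[ℂ] A ⊗[ℂ] A) : Prop :=
  ∀ p q : A, D (p * q) = (p ⊗ₜ[ℂ] (1 : A)) * D q + D p * ((1 : A) ⊗ₜ[ℂ] q)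

variable {D : A →ₗ[ℂ] A ⊗[ℂ] A}

lemma cyclicDer_mul_comm
    (hD : IsTensorDerivation D)
    (p q : A) : cyclicDer D (p * q) = cyclicDer D (q * p) := by
  have hexpand : ∀ p q : A, cyclicDer D (p * q) =
      LinearMap.mul' ℂ A (TensorProduct.comm ℂ A A ((p ⊗ₜ[ℂ] (1 : A)) * D q)) +
        LinearMap.mul' ℂ A (TensorProduct.comm ℂ A A ((q ⊗ₜ[ℂ] (1 : A)) * D p)) := by
    intro p q
    simp only [cyclicDer, LinearMap.comp_apply, LinearEquiv.coe_coe, hD p q, map_add,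
      LinearMap.mul'_comm_mul_one_tmul]
  rw [hexpand, hexpand, add_comm]

lemma commutatorSpan_le_ker_cyclicDer (hD : IsTensorDerivation D) :
    commutatorSpan ℂ A ≤ LinearMap.ker (cyclicDer D) := by
  refine Submodule.span_le.mpr ?_
  rintro _ ⟨p, q, rfl⟩
  simp [cyclicDer_mul_comm hD p q]

lemma numOp_mul (hD : IsTensorDerivation D) (p q : A) :
    numOp X D (p * q) = p * numOp X D q + numOp X D p * q := by
  simp only [numOp, LinearMap.comp_apply, hD p q, map_add, divg_tmul_one_mul,
    divg_mul_one_tmul]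

lemma numOp_self (hDX : D X = (1 : A) ⊗ₜ[ℂ] (1 : A)) : numOp X D X = X := by
  simp [numOp, divg, hDX]

variable {B : Type} [Ring B] [Algebra ℂ B] {ι : B →ₐ[ℂ] A}

lemma numOp_ι (hDB : ∀ b : B, D (ι b) = 0) (b : B) : numOp X D (ι b) = 0 := by
  simp [numOp, hDB]

lemma range_le_ker_cyclicDer (hDB : ∀ b : B, D (ι b) = 0) :
    LinearMap.range ι.toLinearMap ≤ LinearMap.ker (cyclicDer D) := by
  rintro _ ⟨b, rfl⟩
  simp [cyclicDer, hDB]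

lemma range_sup_commutatorSpan_le_comap_numOp (hD : IsTensorDerivation D)
    (hDB : ∀ b : B, D (ι b) = 0) :
    LinearMap.range ι.toLinearMap ⊔ commutatorSpan ℂ A ≤
      (LinearMap.range ι.toLinearMap ⊔ commutatorSpan ℂ A).comap (numOp X D) := by
  refine sup_le ?_ ((commutatorSpan_le_comap _ (numOp_mul X hD)).trans
    (Submodule.comap_mono le_sup_right))
  rintro _ ⟨b, rfl⟩
  simp [numOp_ι X hDB]

lemma numOp_mono (hD : IsTensorDerivation D) (hDX : D X = (1 : A) ⊗ₜ[ℂ] (1 : A))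
    (hDB : ∀ b : B, D (ι b) = 0) (b₀ : B) (bs : List B) :
    numOp X D (mono ι X b₀ bs) = (bs.length : ℂ) • mono ι X b₀ bs := by
  induction bs generalizing b₀ with
  | nil => simp [mono_nil, numOp_ι X hDB]
  | cons b bs ih =>
    rw [mono_cons, numOp_mul X hD, numOp_mul X hD, numOp_self X hDX, ih, numOp_ι X hDB]
    simp only [List.length_cons, Nat.cast_succ, add_smul, one_smul, mul_smul_comm, mul_add,
      zero_mul, add_zero]

lemma top_le_range_sup_iSup_eigenspace_numOp (hfree : IsFreeProduct ι X)
    (hD : IsTensorDerivation D) (hDX : D X = (1 : A) ⊗ₜ[ℂ] (1 : A))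
    (hDB : ∀ b : B, D (ι b) = 0) :
    ⊤ ≤ LinearMap.range ι.toLinearMap ⊔
      ⨆ (μ : ℂ) (_ : μ ≠ 0), Module.End.eigenspace (numOp X D) μ := by
  rw [← span_range_mono_eq_top ι X hfree, Submodule.span_le]
  rintro _ ⟨⟨b₀, bs⟩, rfl⟩
  cases bs with
  | nil => exact Submodule.mem_sup_left ⟨b₀, (mono_nil ι X b₀).symm⟩
  | cons b bs =>
    refine Submodule.mem_sup_right (Submodule.mem_iSup_of_mem ((b :: bs).length : ℂ)
      (Submodule.mem_iSup_of_mem (Nat.cast_ne_zero.mpr (Nat.succ_ne_zero _)) ?_))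
    rw [Module.End.mem_eigenspace_iff]
    exact numOp_mono X hD hDX hDB b₀ (b :: bs)

end Symmetrization

/-- The `B`-symmetrization operator `C : p ↦ (1⊗X) # δ_{X:B}[p] = δ_{X:B}[p]·X` has kernel
`B + [B⟨X⟩, B⟨X⟩]`. -/
theorem ker_symmetrization_eq
    {B A : Type} [Ring B] [Algebra ℂ B] [Ring A] [Algebra ℂ A]
    (ι : B →ₐ[ℂ] A) (X : A) (hfree : IsFreeProduct ι X)
    (D : A →ₗ[ℂ] A ⊗[ℂ] A)
    (hD : ∀ p q : A, D (p * q) = (p ⊗ₜ[ℂ] (1 : A)) * D q + D p * ((1 : A) ⊗ₜ[ℂ] q))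
    (hDX : D X = (1 : A) ⊗ₜ[ℂ] (1 : A))
    (hDB : ∀ b : B, D (ι b) = 0) :
    LinearMap.ker ((LinearMap.mulRight ℂ X) ∘ₗ cyclicDer D) =
      LinearMap.range ι.toLinearMap ⊔
        Submodule.span ℂ {x : A | ∃ p q : A, x = p * q - q * p} := by
  change _ = LinearMap.range ι.toLinearMap ⊔ commutatorSpan ℂ A
  apply le_antisymm
  · intro p hp
    have hC : LinearMap.mul' ℂ A (TensorProduct.comm ℂ A A (D p)) * X = 0 := hp
    have hN : numOp X D p ∈ commutatorSpan ℂ A := by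
      have h := mul'_comm_mul_sub_divg_mem_commutatorSpan X (D p)
      rwa [hC, zero_sub, neg_mem_iff] at h
    have htop := (top_le_range_sup_iSup_eigenspace_numOp X hfree hD hDX hDB).trans
      (sup_le_sup_right (le_sup_left (b := commutatorSpan ℂ A)) _)
    exact Module.End.mem_of_apply_mem (numOp X D)
      (range_sup_commutatorSpan_le_comap_numOp X hD hDB) htop (Submodule.mem_sup_right hN)
  · exact (sup_le (range_le_ker_cyclicDer hDB) (commutatorSpan_le_ker_cyclicDer hD)).trans
      (LinearMap.ker_le_ker_comp _ _)

end
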